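/- Let g(A) be a completely uncoupled queer Kac-Moody algebra with three simple roots α_1, α_2, α_3 whose Dynkin diagram is a path (α_1 — α_2 — α_3, with α_1 and α_3 not connected). Then the Cartan matrix is of type A_3: α_1(h_2) α_2(h_1) = 1 and α_3(h_2) α_2(h_3) = 1. -/
import Mathlib


/-- A complex Lie superalgebra, presented as a module with a ℤ/2-grading
(`even`/`odd` complementary submodules) and a bilinear bracket satisfying
super skew-symmetry and the super Jacobi identity (stated case by case on
homogeneous elements). -/
structure SuperLie (L : Type*) [AddCommGroup L] [Module ℂ L] where
  even : Submodule ℂ L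
  odd : Submodule ℂ L
  bracket : L →ₗ[ℂ] L →ₗ[ℂ] L
  compl : IsCompl even odd
  ee_mem : ∀ x ∈ even, ∀ y ∈ even, bracket x y ∈ even
  eo_mem : ∀ x ∈ even, ∀ y ∈ odd, bracket x y ∈ odd
  oe_mem : ∀ x ∈ odd, ∀ y ∈ even, bracket x y ∈ odd
  oo_mem : ∀ x ∈ odd, ∀ y ∈ odd, bracket x y ∈ even
  skew_e : ∀ x ∈ even, ∀ y : L, bracket x y = - bracket y x
  symm_oo : ∀ x ∈ odd, ∀ y ∈ odd, bracket x y = bracket y x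
  jacobi_e : ∀ x ∈ even, ∀ y z : L,
    bracket x (bracket y z) = bracket (bracket x y) z + bracket y (bracket x z)
  jacobi_oe : ∀ x ∈ odd, ∀ y ∈ even, ∀ z : L,
    bracket x (bracket y z) = bracket (bracket x y) z + bracket y (bracket x z)
  jacobi_oo : ∀ x ∈ odd, ∀ y ∈ odd, ∀ z : L,
    bracket x (bracket y z) = bracket (bracket x y) z - bracket y (bracket x z)

/-- The standard generators-and-coroots frame of a **queer Kac–Moody algebra**
(Section "Cartan datum for qKM algebras" of the paper).  For each simple root `α_i`
we have Chevalley generators `e i, E i ∈ 𝔤_{α_i}` and `f i, F i ∈ 𝔤_{-α_i}` (with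
`e i, f i` of parity `pe i` and `E i, F i` of the opposite parity), the odd coroots
`H i = [E i, f i] = [e i, F i]`, the pure even coroots `h i = [e i, f i]` and
`c i = [E i, F i]`, and the structure scalars `x i j`, `y i j` defined by
`[H i, e j] = x i j • E j` and `[H i, E j] = y i j • e j`. -/
structure QKMFrame (L : Type*) [AddCommGroup L] [Module ℂ L] where
  sl : SuperLie L
  hE : Submodule ℂ L
  hO : Submodule ℂ L
  hE_le : hE ≤ sl.even
  hO_le : hO ≤ sl.odd
  quasitoral : ∀ t ∈ hE, ∀ z ∈ hE ⊔ hO, sl.bracket t z = 0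
  brOO : ∀ a ∈ hO, ∀ b ∈ hO, sl.bracket a b ∈ hE
  n : ℕ
  alpha : Fin n → (L →ₗ[ℂ] ℂ)
  e : Fin n → L
  E : Fin n → L
  f : Fin n → L
  F : Fin n → L
  pe : Fin n → Bool
  x : Fin n → Fin n → ℂ
  y : Fin n → Fin n → ℂ
  e_ne : ∀ i, e i ≠ 0
  E_ne : ∀ i, E i ≠ 0
  e_par : ∀ i, if pe i then e i ∈ sl.odd else e i ∈ sl.even
  f_par : ∀ i, if pe i then f i ∈ sl.odd else f i ∈ sl.even
  E_par : ∀ i, if pe i then E i ∈ sl.even else E i ∈ sl.odd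
  F_par : ∀ i, if pe i then F i ∈ sl.even else F i ∈ sl.odd
  h_mem : ∀ i, sl.bracket (e i) (f i) ∈ hE
  c_mem : ∀ i, sl.bracket (E i) (F i) ∈ hE
  H_mem : ∀ i, sl.bracket (E i) (f i) ∈ hO
  H_eq : ∀ i, sl.bracket (E i) (f i) = sl.bracket (e i) (F i)
  wt_e : ∀ i, ∀ t ∈ hE, sl.bracket t (e i) = alpha i t • e i
  wt_E : ∀ i, ∀ t ∈ hE, sl.bracket t (E i) = alpha i t • E i
  wt_f : ∀ i, ∀ t ∈ hE, sl.bracket t (f i) = -(alpha i t) • f i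
  wt_F : ∀ i, ∀ t ∈ hE, sl.bracket t (F i) = -(alpha i t) • F i
  x_def : ∀ i j, sl.bracket (sl.bracket (E i) (f i)) (e j) = x i j • E j
  y_def : ∀ i j, sl.bracket (sl.bracket (E i) (f i)) (E j) = y i j • e j
  x_def' : ∀ i j, sl.bracket (sl.bracket (E i) (f i)) (f j) =
    (-((if pe i then (-1 : ℂ) else 1) * x i j)) • F j
  y_def' : ∀ i j, sl.bracket (sl.bracket (E i) (f i)) (F j) =
    ((if pe i then (-1 : ℂ) else 1) * y i j) • f j

namespace QKMFrame

variable {L : Type*} [AddCommGroup L] [Module ℂ L] (D : QKMFrame L)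

/-- The odd coroot `H_i = [E_i, f_i]`. -/
def H (i : Fin D.n) : L := D.sl.bracket (D.E i) (D.f i)

/-- The pure even coroot `h_i = [e_i, f_i]`. -/
def hcor (i : Fin D.n) : L := D.sl.bracket (D.e i) (D.f i)

/-- The pure even coroot `c_i = [E_i, F_i]`. -/
def c (i : Fin D.n) : L := D.sl.bracket (D.E i) (D.F i)

end QKMFrame

namespace QKMFrame

variable {L : Type*} [AddCommGroup L] [Module ℂ L] (D : QKMFrame L)

lemma smul_cancel_aux {s t : ℂ} {v : L} (hv : v ≠ 0) (h : s • v = t • v) : s = t := by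
  have h0 : (s - t) • v = 0 := by rw [sub_smul, h, sub_self]
  rcases smul_eq_zero.mp h0 with h1 | h1
  · exact sub_eq_zero.mp h1
  · exact absurd h1 hv

lemma H_odd (i : Fin D.n) : D.H i ∈ D.sl.odd := D.hO_le (D.H_mem i)

lemma bHH_mem (i j : Fin D.n) : D.sl.bracket (D.H i) (D.H j) ∈ D.hE :=
  D.brOO _ (D.H_mem i) _ (D.H_mem j)

/-- `α_k([H_i, H_j]) = x_{jk} y_{ik} + x_{ik} y_{jk}`. -/
lemma phi (i j k : Fin D.n) :
    D.alpha k (D.sl.bracket (D.H i) (D.H j)) = D.x j k * D.y i k + D.x i k * D.y j k := by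
  have jac := D.sl.jacobi_oo _ (D.H_odd i) _ (D.H_odd j) (D.e k)
  unfold QKMFrame.H at jac
  rw [D.x_def j k, D.x_def i k] at jac
  simp only [map_smul, LinearMap.smul_apply] at jac
  rw [D.y_def i k, D.y_def j k] at jac
  have hw := D.wt_e k _ (D.bHH_mem i j)
  unfold QKMFrame.H at hw
  rw [hw] at jac
  apply smul_cancel_aux (D.e_ne k)
  rw [smul_smul, smul_smul, eq_sub_iff_add_eq] at jac
  rw [add_smul]
  exact jac.symm

/-- First expansion: `[H_i, H_j] = y_{ij} h_j + ε_i ε_j x_{ij} c_j`. -/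
lemma exp1 (i j : Fin D.n) :
    D.sl.bracket (D.H i) (D.H j) = D.y i j • D.hcor j +
      ((if D.pe i then (-1 : ℂ) else 1) * (if D.pe j then (-1 : ℂ) else 1) * D.x i j) • D.c j := by
  by_cases hj : D.pe j
  · have hEj : D.E j ∈ D.sl.even := by have := D.E_par j; rwa [if_pos hj] at this
    have jac := D.sl.jacobi_oe _ (D.H_odd i) _ hEj (D.f j)
    unfold QKMFrame.H QKMFrame.hcor QKMFrame.c at *
    rw [D.y_def i j, D.x_def' i j] at jac
    simp only [map_smul, LinearMap.smul_apply] at jac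
    rw [jac, if_pos hj]
    match_scalars <;> ring
  · have hEj : D.E j ∈ D.sl.odd := by have := D.E_par j; rwa [if_neg hj] at this
    have jac := D.sl.jacobi_oo _ (D.H_odd i) _ hEj (D.f j)
    unfold QKMFrame.H QKMFrame.hcor QKMFrame.c at *
    rw [D.y_def i j, D.x_def' i j] at jac
    simp only [map_smul, LinearMap.smul_apply] at jac
    rw [jac, if_neg hj]
    match_scalars <;> ring

/-- Second expansion: `[H_i, H_j] = ε_i ε_j y_{ij} h_j + x_{ij} c_j`. -/
lemma exp2 (i j : Fin D.n) :
    D.sl.bracket (D.H i) (D.H j) =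
      ((if D.pe i then (-1 : ℂ) else 1) * (if D.pe j then (-1 : ℂ) else 1) * D.y i j) • D.hcor j +
      D.x i j • D.c j := by
  by_cases hj : D.pe j
  · have hej : D.e j ∈ D.sl.odd := by have := D.e_par j; rwa [if_pos hj] at this
    have jac := D.sl.jacobi_oo _ (D.H_odd i) _ hej (D.F j)
    have heq := D.H_eq j
    unfold QKMFrame.H QKMFrame.hcor QKMFrame.c at *
    rw [D.x_def i j, D.y_def' i j] at jac
    simp only [map_smul, LinearMap.smul_apply] at jac
    rw [heq, jac, if_pos hj]
    match_scalars <;> ring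
  · have hej : D.e j ∈ D.sl.even := by have := D.e_par j; rwa [if_neg hj] at this
    have jac := D.sl.jacobi_oe _ (D.H_odd i) _ hej (D.F j)
    have heq := D.H_eq j
    unfold QKMFrame.H QKMFrame.hcor QKMFrame.c at *
    rw [D.x_def i j, D.y_def' i j] at jac
    simp only [map_smul, LinearMap.smul_apply] at jac
    rw [heq, jac, if_neg hj]
    match_scalars <;> ring

end QKMFrame


/-- Pure scalar endgame: the Cartan integers of a completely uncoupled path are those
of `A₃`. -/
lemma qKM_endgame (a b c' d' u v p q y12 y21 y23 y32 : ℂ)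
    (hy12 : y12 ≠ 0) (hy21 : y21 ≠ 0) (hy23 : y23 ≠ 0) (hy32 : y32 ≠ 0)
    (hG1 : 2 * y21 = y12 * a + u * (v * y21))
    (hG2 : 2 * y12 = y21 * b + v * (u * y12))
    (hG3 : 2 * y23 = y32 * c' + q * (p * y23))
    (hG4 : 2 * y32 = y23 * d' + p * (q * y32))
    (hR : q * y12 + u * y32 = 0)
    (hT2 : (0 : ℂ) = y32 * a + q * (v * y21))
    (hT1 : (0 : ℂ) = y12 * c' + u * (p * y23)) :
    a * b = 1 ∧ c' * d' = 1 := by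
  have hu : u ≠ 0 := by
    intro h0
    have hq : q = 0 := by
      have h1 : q * y12 = 0 := by linear_combination hR - y32 * h0
      rcases mul_eq_zero.mp h1 with h | h
      · exact h
      · exact absurd h hy12
    have ha : a = 0 := by
      have h1 : y32 * a = 0 := by linear_combination -hT2 - (v * y21) * hq
      rcases mul_eq_zero.mp h1 with h | h
      · exact absurd h hy32
      · exact h
    have h2 : y21 = 0 := by
      linear_combination (hG1 + y12 * ha + (v * y21) * h0) / 2
    exact hy21 h2
  have hq : q ≠ 0 := by
    intro h0
    apply hu
    have h1 : u * y32 = 0 := by linear_combination hR - y12 * h0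
    rcases mul_eq_zero.mp h1 with h | h
    · exact h
    · exact absurd h hy32
  have huv : u * v = 1 := by
    have h1 : a * y12 = u * v * y21 := by
      have h2 : q * (a * y12 - u * v * y21) = 0 := by linear_combination a * hR + u * hT2
      rcases mul_eq_zero.mp h2 with h | h
      · exact absurd h hq
      · exact sub_eq_zero.mp h
    have h3 : (u * v - 1) * y21 = 0 := by linear_combination (-hG1 - h1) / 2
    rcases mul_eq_zero.mp h3 with h | h
    · exact sub_eq_zero.mp h
    · exact absurd h hy21
  have hpq : p * q = 1 := by
    have h1 : c' * y32 = p * q * y23 := by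
      have h2 : u * (c' * y32 - p * q * y23) = 0 := by linear_combination c' * hR + q * hT1
      rcases mul_eq_zero.mp h2 with h | h
      · exact absurd h hu
      · exact sub_eq_zero.mp h
    have h3 : (p * q - 1) * y23 = 0 := by linear_combination (-hG3 - h1) / 2
    rcases mul_eq_zero.mp h3 with h | h
    · exact sub_eq_zero.mp h
    · exact absurd h hy23
  constructor
  · have e1 : a * y12 = y21 := by linear_combination -hG1 - y21 * huv
    have e2 : b * y21 = y12 := by linear_combination -hG2 - y12 * huv
    have e3 : (a * b - 1) * (y12 * y21) = 0 := by
      linear_combination (b * y21) * e1 + y21 * e2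
    rcases mul_eq_zero.mp e3 with h | h
    · exact sub_eq_zero.mp h
    · exact absurd h (mul_ne_zero hy12 hy21)
  · have e1 : c' * y32 = y23 := by linear_combination -hG3 - y23 * hpq
    have e2 : d' * y23 = y32 := by linear_combination -hG4 - y32 * hpq
    have e3 : (c' * d' - 1) * (y23 * y32) = 0 := by
      linear_combination (d' * y23) * e1 + y23 * e2
    rcases mul_eq_zero.mp e3 with h | h
    · exact sub_eq_zero.mp h
    · exact absurd h (mul_ne_zero hy23 hy32)

/-- Let `𝔤(𝒜)` be a completely uncoupled queer Kac–Moody algebra with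
three simple roots `α₁ — α₂ — α₃` forming a path (`α₁, α₃` not connected), all of type
`Tak(𝔰𝔩(2))`.  Then the Cartan matrix is of type `A₃`:
`α₁(h₂) α₂(h₁) = 1` and `α₃(h₂) α₂(h₃) = 1`. -/
theorem qKM_uncoupled_path_is_A3
    {L : Type} [AddCommGroup L] [Module ℂ L] (D : QKMFrame L)
    (hn : D.n = 3) (i1 i2 i3 : Fin D.n)
    (h12 : i1 ≠ i2) (h13 : i1 ≠ i3) (h23 : i2 ≠ i3)
    -- all simple roots are of type `Tak(𝔰𝔩(2))`:
    (hdiag : ∀ i, D.alpha i (D.hcor i) = 2)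
    (hcent : ∀ i, D.alpha i (D.c i) = 0)
    (hsq : ∀ i, D.sl.bracket (D.H i) (D.H i) = (2 : ℂ) • D.c i)
    -- `α₁ — α₂` and `α₂ — α₃` are connected and uncoupled:
    (hconn12 : D.alpha i1 (D.hcor i2) * D.alpha i2 (D.hcor i1) ≠ 0)
    (hconn23 : D.alpha i3 (D.hcor i2) * D.alpha i2 (D.hcor i3) ≠ 0)
    (huncp12 : D.y i1 i2 * D.y i2 i1 ≠ 0)
    (huncp23 : D.y i2 i3 * D.y i3 i2 ≠ 0)
    -- `α₁` and `α₃` are not connected: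
    (hnc13 : D.alpha i1 (D.hcor i3) = 0) (hnc31 : D.alpha i3 (D.hcor i1) = 0)
    (hH13 : D.sl.bracket (D.H i1) (D.H i3) = 0) :
    D.alpha i1 (D.hcor i2) * D.alpha i2 (D.hcor i1) = 1 ∧
    D.alpha i3 (D.hcor i2) * D.alpha i2 (D.hcor i3) = 1 := by
  classical
  have hy12 : D.y i1 i2 ≠ 0 := left_ne_zero_of_mul huncp12
  have hy21 : D.y i2 i1 ≠ 0 := right_ne_zero_of_mul huncp12
  have hy23 : D.y i2 i3 ≠ 0 := left_ne_zero_of_mul huncp23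
  have hy32 : D.y i3 i2 ≠ 0 := right_ne_zero_of_mul huncp23
  -- `α_k(c_i) = x_{ik} y_{ik}`
  have hac : ∀ i k, D.alpha k (D.c i) = D.x i k * D.y i k := by
    intro i k
    have h := congrArg (D.alpha k) (hsq i)
    rw [map_smul, smul_eq_mul, D.phi i i k] at h
    linear_combination -h / 2
  -- on connected uncoupled pairs the parities agree
  have key : ∀ i j, D.y i j ≠ 0 →
      (if D.pe i then (-1 : ℂ) else 1) * (if D.pe j then (-1 : ℂ) else 1) = 1 := by
    intro i j hy
    have h1 := congrArg (D.alpha j) (D.exp1 i j)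
    have h2 := congrArg (D.alpha j) (D.exp2 i j)
    rw [map_add, map_smul, map_smul, smul_eq_mul, smul_eq_mul, hdiag j, hcent j] at h1 h2
    have h3 : ((if D.pe i then (-1 : ℂ) else 1) * (if D.pe j then (-1 : ℂ) else 1) - 1)
        * D.y i j = 0 := by linear_combination (h1 - h2) / 2
    rcases mul_eq_zero.mp h3 with h | h
    · exact sub_eq_zero.mp h
    · exact absurd h hy
  have hp12 := key i1 i2 hy12
  have hp21 := key i2 i1 hy21
  have hp23 := key i2 i3 hy23
  have hp32 := key i3 i2 hy32
  have h22 : (if D.pe i2 then (-1 : ℂ) else 1) * (if D.pe i2 then (-1 : ℂ) else 1) = 1 := by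
    by_cases h : D.pe i2 <;> simp [h]
  have hp13 : (if D.pe i1 then (-1 : ℂ) else 1) * (if D.pe i3 then (-1 : ℂ) else 1) = 1 := by
    linear_combination ((if D.pe i2 then (-1 : ℂ) else 1) * (if D.pe i3 then (-1 : ℂ) else 1))
      * hp12 + hp23
      - ((if D.pe i1 then (-1 : ℂ) else 1) * (if D.pe i3 then (-1 : ℂ) else 1)) * h22
  have hp31 : (if D.pe i3 then (-1 : ℂ) else 1) * (if D.pe i1 then (-1 : ℂ) else 1) = 1 := by
    linear_combination hp13
  -- master relation
  have hM : ∀ i j k, (if D.pe i then (-1 : ℂ) else 1) * (if D.pe j then (-1 : ℂ) else 1) = 1 →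
      D.x j k * D.y i k + D.x i k * D.y j k
        = D.y i j * D.alpha k (D.hcor j) + D.x i j * D.alpha k (D.c j) := by
    intro i j k hε
    have h1 := congrArg (D.alpha k) (D.exp1 i j)
    rw [map_add, map_smul, map_smul, smul_eq_mul, smul_eq_mul, D.phi i j k, hε, one_mul] at h1
    exact h1
  -- vanishing constants between the ends of the path
  have hy13 : D.y i1 i3 = 0 := by
    have h := D.exp1 i1 i3
    rw [hH13] at h
    have h' := congrArg (D.alpha i3) h.symm
    rw [map_add, map_smul, map_smul, smul_eq_mul, smul_eq_mul, hdiag i3, hcent i3, map_zero] at h'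
    linear_combination h' / 2
  have hH31 : D.sl.bracket (D.H i3) (D.H i1) = 0 := by
    rw [D.sl.symm_oo _ (D.H_odd i3) _ (D.H_odd i1), hH13]
  have hy31 : D.y i3 i1 = 0 := by
    have h := D.exp1 i3 i1
    rw [hH31] at h
    have h' := congrArg (D.alpha i1) h.symm
    rw [map_add, map_smul, map_smul, smul_eq_mul, smul_eq_mul, hdiag i1, hcent i1, map_zero] at h'
    linear_combination h' / 2
  have hx13 : D.x i1 i3 = 0 := by
    have h := hM i2 i1 i3 hp21
    rw [hnc31, hac i1 i3, hy13] at h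
    have h2 : D.x i1 i3 * D.y i2 i3 = 0 := by linear_combination h
    rcases mul_eq_zero.mp h2 with h3 | h3
    · exact h3
    · exact absurd h3 hy23
  have hx31 : D.x i3 i1 = 0 := by
    have h := hM i2 i3 i1 hp23
    rw [hnc13, hac i3 i1, hy31] at h
    have h2 : D.x i3 i1 * D.y i2 i1 = 0 := by linear_combination h
    rcases mul_eq_zero.mp h2 with h3 | h3
    · exact h3
    · exact absurd h3 hy21
  -- diagonal constants
  have hyjj : ∀ j, D.y j j = 0 := by
    intro j
    have h1 := congrArg (D.alpha j) (D.exp1 j j)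
    have h2 := congrArg (D.alpha j) (hsq j)
    rw [map_add, map_smul, map_smul, smul_eq_mul, smul_eq_mul, hdiag j, hcent j] at h1
    rw [map_smul, smul_eq_mul, hcent j] at h2
    linear_combination (h2 - h1) / 2
  have hx11 : D.x i1 i1 = 2 := by
    have h := hM i2 i1 i1 hp21
    rw [hdiag i1, hac i1 i1, hyjj i1] at h
    have h2 : (D.x i1 i1 - 2) * D.y i2 i1 = 0 := by linear_combination h
    rcases mul_eq_zero.mp h2 with h3 | h3
    · exact sub_eq_zero.mp h3
    · exact absurd h3 hy21
  have hx22 : D.x i2 i2 = 2 := by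
    have h := hM i1 i2 i2 hp12
    rw [hdiag i2, hac i2 i2, hyjj i2] at h
    have h2 : (D.x i2 i2 - 2) * D.y i1 i2 = 0 := by linear_combination h
    rcases mul_eq_zero.mp h2 with h3 | h3
    · exact sub_eq_zero.mp h3
    · exact absurd h3 hy12
  have hx33 : D.x i3 i3 = 2 := by
    have h := hM i2 i3 i3 hp23
    rw [hdiag i3, hac i3 i3, hyjj i3] at h
    have h2 : (D.x i3 i3 - 2) * D.y i2 i3 = 0 := by linear_combination h
    rcases mul_eq_zero.mp h2 with h3 | h3
    · exact sub_eq_zero.mp h3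
    · exact absurd h3 hy23
  -- the G–relations
  have hG1 := hM i1 i2 i1 hp12
  rw [hyjj i1, hx11, hac i2 i1] at hG1
  have hG2 := hM i2 i1 i2 hp21
  rw [hyjj i2, hx22, hac i1 i2] at hG2
  have hG3 := hM i3 i2 i3 hp32
  rw [hyjj i3, hx33, hac i2 i3] at hG3
  have hG4 := hM i2 i3 i2 hp23
  rw [hyjj i2, hx22, hac i3 i2] at hG4
  -- the orthogonality relation
  have hR : D.x i3 i2 * D.y i1 i2 + D.x i1 i2 * D.y i3 i2 = 0 := by
    have h := D.phi i1 i3 i2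
    rw [hH13, map_zero] at h
    exact h.symm
  -- the T–relations
  have hT2 := hM i3 i2 i1 hp32
  rw [hy31, hx31, hac i2 i1] at hT2
  have hT1 := hM i1 i2 i3 hp12
  rw [hy13, hx13, hac i2 i3] at hT1
  exact qKM_endgame (D.alpha i1 (D.hcor i2)) (D.alpha i2 (D.hcor i1))
    (D.alpha i3 (D.hcor i2)) (D.alpha i2 (D.hcor i3))
    (D.x i1 i2) (D.x i2 i1) (D.x i2 i3) (D.x i3 i2)
    (D.y i1 i2) (D.y i2 i1) (D.y i2 i3) (D.y i3 i2)
    hy12 hy21 hy23 hy32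
    (by linear_combination hG1) (by linear_combination hG2)
    (by linear_combination hG3) (by linear_combination hG4)
    (by linear_combination hR) (by linear_combination hT2) (by linear_combination hT1)
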